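/- arXiv:2211.00505 — 4 statements merged into one kernel-verified Lean document; each statement's English description precedes it below -/
import Mathlib

section
/- Let 0 < ρ < 1 and let (z_n)_{n≥1} be a sequence of positive real numbers with ∑_{n=1}^∞ z_n^{-ρ} < ∞, and let f : ℂ → ℂ be the entire function f(z) = ∏_{n=1}^∞ (1 + z/z_n). Then ∫_0^∞ (f'(x)/f(x)) · x^{-ρ} dx = Γ(1-ρ) · Γ(ρ) · ∑_{n=1}^∞ z_n^{-ρ} < ∞. -/
/-!
The product converges locally uniformly (as `∑ 1/zₙ < ∞`), so its logarithmic derivative is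
`∑ 1/(x + zₙ)`. The substitution `x = a t/(1 - t)` turns `∫₀^∞ x^(-ρ)/(x + a) dx` into
`a^(-ρ) B(1 - ρ, ρ) = a^(-ρ) Γ(1 - ρ) Γ(ρ)`; for `a = zₙ` these are summable, so the series may be
integrated termwise.
-/

open MeasureTheory Real Set

theorem summable_rpow_neg_of_le {ι : Type*} {z : ι → ℝ} (hz : ∀ i, 0 < z i) {ρ σ : ℝ}
    (hρ : 0 ≤ ρ) (hρσ : ρ ≤ σ) (h : Summable fun i ↦ z i ^ (-ρ)) :
    Summable fun i ↦ z i ^ (-σ) := by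
  refine h.of_norm_bounded_eventually ?_
  filter_upwards [h.tendsto_cofinite_zero.eventually (gt_mem_nhds one_pos)] with i hi
  have h1 : 1 ≤ z i := by
    by_contra! h1
    exact hi.not_ge (one_le_rpow_of_pos_of_le_one_of_nonpos (hz i) h1.le (by linarith))
  rw [norm_of_nonneg (rpow_nonneg (hz i).le _)]
  exact rpow_le_rpow_of_exponent_le h1 (by linarith)

section LogDeriv

variable {ι : Type*} {a : ι → ℂ}

theorem summable_inv_add_of_summable_inv (ha0 : ∀ i, a i ≠ 0) (ha : Summable fun i ↦ (a i)⁻¹)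
    (s : ℂ) : Summable fun i ↦ (s + a i)⁻¹ := by
  refine (ha.norm.mul_left 2).of_norm_bounded_eventually ?_
  filter_upwards [(ha.mul_left s).norm.tendsto_cofinite_zero.eventually_le_const one_half_pos]
    with i hi
  have hfac : s + a i = a i * (1 + s * (a i)⁻¹) := by
    rw [mul_add, mul_one, mul_left_comm, mul_inv_cancel₀ (ha0 i), mul_one, add_comm]
  have hfac_norm : 1 / 2 ≤ ‖1 + s * (a i)⁻¹‖ := by
    have := norm_sub_norm_le (1 : ℂ) (-(s * (a i)⁻¹))
    rw [norm_one, norm_neg, sub_neg_eq_add] at this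
    linarith
  rw [hfac, mul_inv, norm_mul, norm_inv (1 + _), mul_comm 2]
  gcongr
  rw [inv_le_comm₀ (by linarith) two_pos]
  linarith

theorem logDeriv_tprod_one_add_div (ha0 : ∀ i, a i ≠ 0) (ha : Summable fun i ↦ (a i)⁻¹) {s : ℂ}
    (hs : ∀ i, s + a i ≠ 0) :
    logDeriv (fun w ↦ ∏' i, (1 + w / a i)) s = ∑' i, (s + a i)⁻¹ := by
  have hne : ∀ i, 1 + s / a i ≠ 0 := fun i ↦ by
    rw [one_add_div (ha0 i), add_comm]
    exact div_ne_zero (hs i) (ha0 i)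
  have hfac : ∀ i, logDeriv (fun w ↦ 1 + w / a i) s = (s + a i)⁻¹ := fun i ↦ by
    rw [logDeriv_apply, deriv_const_add, deriv_div_const, deriv_id'', one_add_div (ha0 i),
      div_div_div_cancel_right₀ (ha0 i), one_div, add_comm]
  have hbound : Summable fun i ↦ (‖s‖ + 1) * ‖(a i)⁻¹‖ := ha.norm.mul_left _
  simp_rw [← hfac]
  refine logDeriv_tprod_eq_tsum Metric.isOpen_ball (mem_ball_zero_iff.2 (lt_add_one ‖s‖)) hne
    (fun i ↦ by fun_prop) (by simpa only [hfac] using summable_inv_add_of_summable_inv ha0 ha s)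
    (hbound.multipliableLocallyUniformlyOn_one_add Metric.isOpen_ball
      (.of_forall fun i w hw ↦ ?_) fun i ↦ by fun_prop)
    (tprod_one_add_ne_zero_of_summable hne ?_)
  · rw [div_eq_mul_inv, norm_mul]
    exact mul_le_mul_of_nonneg_right (mem_ball_zero_iff.1 hw).le (norm_nonneg _)
  · simpa [div_eq_mul_inv] using ha.norm.mul_left ‖s‖

end LogDeriv

theorem MeasureTheory.integrable_tsum_of_summable_integral_norm {α E ι : Type*}
    [MeasurableSpace α] {μ : Measure α} [NormedAddCommGroup E] [CompleteSpace E] [Countable ι]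
    {F : ι → α → E} (hF_int : ∀ i, Integrable (F i) μ)
    (hF_sum : Summable fun i ↦ ∫ a, ‖F i a‖ ∂μ) :
    Integrable (fun a ↦ ∑' i, F i a) μ := by
  have hL : ∑' i, ‖(hF_int i).toL1 (F i)‖ₑ ≠ ⊤ := by
    simp_rw [← ofReal_norm, L1.norm_of_fun_eq_integral_norm]
    rw [← ENNReal.ofReal_tsum_of_nonneg (fun i ↦ integral_nonneg fun a ↦ norm_nonneg _) hF_sum]
    exact ENNReal.ofReal_ne_top
  have hcoe : ∀ᵐ a ∂μ, ∀ i, (hF_int i).toL1 (F i) a = F i a :=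
    ae_all_iff.2 fun i ↦ (hF_int i).coeFn_toL1
  refine (L1.integrable_coeFn _).congr ((Lp.coeFn_tsum hL).trans ?_)
  filter_upwards [hcoe] with a ha using tsum_congr ha

section Beta

variable {u v : ℝ}

theorem ofReal_rpow_mul_one_sub_rpow {t : ℝ} (ht : t ∈ Ioo (0 : ℝ) 1) :
    ((t ^ (u - 1) * (1 - t) ^ (v - 1) : ℝ) : ℂ) =
      (t : ℂ) ^ ((u : ℂ) - 1) * (1 - (t : ℂ)) ^ ((v : ℂ) - 1) := by
  push_cast [Complex.ofReal_cpow ht.1.le, Complex.ofReal_cpow (sub_pos.2 ht.2).le]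
  rfl

theorem integrableOn_rpow_mul_one_sub_rpow (hu : 0 < u) (hv : 0 < v) :
    IntegrableOn (fun t : ℝ ↦ t ^ (u - 1) * (1 - t) ^ (v - 1)) (Ioo 0 1) := by
  have hβ := (intervalIntegrable_iff_integrableOn_Ioo_of_le zero_le_one).1
    (Complex.betaIntegral_convergent (u := u) (v := v) (by simpa) (by simpa))
  refine IntegrableOn.congr_fun hβ.re (fun t ht ↦ ?_) measurableSet_Ioo
  simp [← ofReal_rpow_mul_one_sub_rpow ht]

theorem integral_rpow_mul_one_sub_rpow (hu : 0 < u) (hv : 0 < v) :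
    ∫ t in Ioo (0 : ℝ) 1, t ^ (u - 1) * (1 - t) ^ (v - 1) = Gamma u * Gamma v / Gamma (u + v) := by
  apply Complex.ofReal_injective
  rw [← integral_complex_ofReal, setIntegral_congr_fun measurableSet_Ioo
    fun t ht ↦ ofReal_rpow_mul_one_sub_rpow ht, ← integral_Ioc_eq_integral_Ioo,
    ← intervalIntegral.integral_of_le zero_le_one, ← Complex.betaIntegral,
    Complex.betaIntegral_eq_Gamma_mul_div _ _ (by simpa) (by simpa)]
  push_cast [← Complex.ofReal_add, Complex.Gamma_ofReal]
  rfl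

end Beta

section HalfLine

variable {E : Type*} [NormedAddCommGroup E] [NormedSpace ℝ E] {a : ℝ}

theorem image_mul_div_one_sub_Ioo (ha : 0 < a) :
    (fun t ↦ a * t / (1 - t)) '' Ioo 0 1 = Ioi 0 := by
  ext x
  simp only [mem_image, mem_Ioi, mem_Ioo]
  constructor
  · rintro ⟨t, ⟨ht0, ht1⟩, rfl⟩
    exact div_pos (mul_pos ha ht0) (sub_pos.2 ht1)
  · intro hx
    refine ⟨x / (x + a), ⟨by positivity, (div_lt_one (by positivity)).2 (by linarith)⟩, ?_⟩
    have hxa : x + a ≠ 0 := by positivity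
    rw [one_sub_div hxa, add_sub_cancel_left, mul_div_assoc', div_div_div_cancel_right₀ hxa,
      mul_div_cancel_left₀ x ha.ne']

theorem injOn_mul_div_one_sub (ha : a ≠ 0) : InjOn (fun t ↦ a * t / (1 - t)) (Ioo 0 1) := by
  intro s hs t ht hst
  have hs1 : 1 - s ≠ 0 := (sub_pos.2 hs.2).ne'
  have ht1 : 1 - t ≠ 0 := (sub_pos.2 ht.2).ne'
  field_simp at hst
  linear_combination hst

theorem hasDerivAt_mul_div_one_sub {t : ℝ} (ht : t ≠ 1) :
    HasDerivAt (fun t ↦ a * t / (1 - t)) (a / (1 - t) ^ 2) t := by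
  have ht' : 1 - t ≠ 0 := sub_ne_zero.2 ht.symm
  refine (((hasDerivAt_id' t).const_mul a).div ((hasDerivAt_id' t).const_sub 1) ht').congr_deriv ?_
  field_simp
  ring

theorem hasDerivWithinAt_mul_div_one_sub_Ioo :
    ∀ t ∈ Ioo (0 : ℝ) 1, HasDerivWithinAt (fun t ↦ a * t / (1 - t)) (a / (1 - t) ^ 2) (Ioo 0 1) t :=
  fun _ ht ↦ (hasDerivAt_mul_div_one_sub ht.2.ne).hasDerivWithinAt

theorem integrableOn_Ioi_iff_mul_div_one_sub (ha : 0 < a) (g : ℝ → E) :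
    IntegrableOn g (Ioi 0) ↔
      IntegrableOn (fun t ↦ (a / (1 - t) ^ 2) • g (a * t / (1 - t))) (Ioo 0 1) := by
  have habs : ∀ t : ℝ, |a / (1 - t) ^ 2| = a / (1 - t) ^ 2 := fun t ↦ abs_of_nonneg (by positivity)
  rw [← image_mul_div_one_sub_Ioo ha, integrableOn_image_iff_integrableOn_abs_deriv_smul
    measurableSet_Ioo hasDerivWithinAt_mul_div_one_sub_Ioo (injOn_mul_div_one_sub ha.ne')]
  simp only [habs]

theorem integral_Ioi_eq_integral_mul_div_one_sub (ha : 0 < a) (g : ℝ → E) :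
    ∫ x in Ioi 0, g x = ∫ t in Ioo 0 1, (a / (1 - t) ^ 2) • g (a * t / (1 - t)) := by
  have habs : ∀ t : ℝ, |a / (1 - t) ^ 2| = a / (1 - t) ^ 2 := fun t ↦ abs_of_nonneg (by positivity)
  rw [← image_mul_div_one_sub_Ioo ha, integral_image_eq_integral_abs_deriv_smul
    measurableSet_Ioo hasDerivWithinAt_mul_div_one_sub_Ioo (injOn_mul_div_one_sub ha.ne')]
  simp only [habs]

end HalfLine

section Stieltjes

variable {ρ a : ℝ}

theorem div_one_sub_sq_mul_rpow_neg_div_add (ha : 0 < a) {t : ℝ} (ht : t ∈ Ioo (0 : ℝ) 1) :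
    (a / (1 - t) ^ 2) * ((a * t / (1 - t)) ^ (-ρ) / (a * t / (1 - t) + a)) =
      a ^ (-ρ) * (t ^ (-ρ) * (1 - t) ^ (ρ - 1)) := by
  have h1t : 0 < 1 - t := sub_pos.2 ht.2
  rw [div_rpow (mul_pos ha ht.1).le h1t.le, mul_rpow ha.le ht.1.le, rpow_sub_one h1t.ne',
    rpow_neg h1t.le]
  field_simp
  ring

theorem integrableOn_rpow_neg_div_add (hρ0 : 0 < ρ) (hρ1 : ρ < 1) (ha : 0 < a) :
    IntegrableOn (fun x ↦ x ^ (-ρ) / (x + a)) (Ioi 0) := by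
  rw [integrableOn_Ioi_iff_mul_div_one_sub ha]
  have := (integrableOn_rpow_mul_one_sub_rpow (sub_pos.2 hρ1) hρ0).const_mul (a ^ (-ρ))
  rw [sub_sub_cancel_left] at this
  exact IntegrableOn.congr_fun this
    (fun t ht ↦ (div_one_sub_sq_mul_rpow_neg_div_add ha ht).symm) measurableSet_Ioo

theorem integral_rpow_neg_div_add (hρ0 : 0 < ρ) (hρ1 : ρ < 1) (ha : 0 < a) :
    ∫ x in Ioi 0, x ^ (-ρ) / (x + a) = Gamma (1 - ρ) * Gamma ρ * a ^ (-ρ) := by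
  have hβ := integral_rpow_mul_one_sub_rpow (sub_pos.2 hρ1) hρ0
  rw [sub_sub_cancel_left, sub_add_cancel, Gamma_one, div_one] at hβ
  rw [integral_Ioi_eq_integral_mul_div_one_sub ha]
  simp only [smul_eq_mul]
  rw [setIntegral_congr_fun measurableSet_Ioo fun t ht ↦ div_one_sub_sq_mul_rpow_neg_div_add ha ht,
    integral_const_mul, hβ, mul_comm]

end Stieltjes

/-- For `f(z) = ∏ (1 + z/zₙ)` with positive `zₙ` and `∑ zₙ^(-ρ) < ∞`, `0 < ρ < 1`:
`∫_0^∞ (f'(x)/f(x)) x^(-ρ) dx = Γ(1-ρ) Γ(ρ) ∑ zₙ^(-ρ) < ∞`. -/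
theorem stmt_6 (ρ : ℝ) (hρ0 : 0 < ρ) (hρ1 : ρ < 1)
    (z : ℕ → ℝ) (hz : ∀ n, 0 < z n)
    (hsum : Summable fun n => (z n) ^ (-ρ))
    (f : ℂ → ℂ) (hf : ∀ s : ℂ, f s = ∏' n, (1 + s / (z n : ℂ))) :
    IntegrableOn (fun x : ℝ => (deriv f (x : ℂ) / f (x : ℂ)).re * x ^ (-ρ)) (Ioi 0) ∧
    ∫ x in Ioi (0 : ℝ), (deriv f (x : ℂ) / f (x : ℂ)).re * x ^ (-ρ)
      = Real.Gamma (1 - ρ) * Real.Gamma ρ * ∑' n, (z n) ^ (-ρ) := by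
  have hinv : Summable fun n ↦ ((z n : ℂ))⁻¹ := by
    have := summable_rpow_neg_of_le hz hρ0.le hρ1.le hsum
    simp_rw [rpow_neg_one] at this
    exact_mod_cast Complex.summable_ofReal.2 this
  have hlog : ∀ x ∈ Ioi (0 : ℝ),
      (deriv f x / f x).re * x ^ (-ρ) = ∑' n, x ^ (-ρ) / (x + z n) := fun x hx ↦ by
    rw [← logDeriv_apply, funext hf, logDeriv_tprod_one_add_div
      (fun n ↦ Complex.ofReal_ne_zero.2 (hz n).ne') hinv
      (fun n ↦ by exact_mod_cast (add_pos (mem_Ioi.1 hx) (hz n)).ne')]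
    simp_rw [← Complex.ofReal_add, ← Complex.ofReal_inv, ← Complex.ofReal_tsum, Complex.ofReal_re,
      ← tsum_mul_right, inv_mul_eq_div]
  have hint : ∀ n, IntegrableOn (fun x ↦ x ^ (-ρ) / (x + z n)) (Ioi 0) :=
    fun n ↦ integrableOn_rpow_neg_div_add hρ0 hρ1 (hz n)
  have hnorm : Summable fun n ↦ ∫ x in Ioi (0 : ℝ), ‖x ^ (-ρ) / (x + z n)‖ := by
    refine (hsum.mul_left (Gamma (1 - ρ) * Gamma ρ)).congr fun n ↦ ?_
    rw [← integral_rpow_neg_div_add hρ0 hρ1 (hz n)]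
    refine setIntegral_congr_fun measurableSet_Ioi fun x hx ↦ ?_
    exact (norm_of_nonneg (div_nonneg (rpow_nonneg hx.le _) (add_pos hx (hz n)).le)).symm
  constructor
  · exact IntegrableOn.congr_fun (integrable_tsum_of_summable_integral_norm hint hnorm)
      (fun x hx ↦ (hlog x hx).symm) measurableSet_Ioi
  · rw [setIntegral_congr_fun measurableSet_Ioi hlog,
      ← integral_tsum_of_summable_integral_norm hint hnorm]
    simp_rw [integral_rpow_neg_div_add hρ0 hρ1 (hz _), tsum_mul_left]
end

section
/- Let (z_n)_{n≥1} be a sequence of positive real numbers with ∑_{n=1}^∞ 1/z_n < ∞, let f : ℂ → ℂ be the entire function f(z) = ∏_{n=1}^∞ (1 + z/z_n), and define φ(t) = ∑_{n=1}^∞ exp(-z_n t) for t > 0. Then for every complex number z with Re z > 0 one has f(z) = exp( ∫_0^∞ ((1 - e^{-z t})/t) · φ(t) dt ). -/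
open MeasureTheory Real Set

/-! For `a > 0` and `Re s ≥ 0` one has the Frullani-type identity
`∫₀^∞ (1 - e^{-st})/t · e^{-at} dt = log (1 + s/a)`: the integrand equals
`∫₀¹ s e^{-(a + σs)t} dσ`, and integrating in `t` first leaves `∫₀¹ s/(a + σs) dσ`.
The integrand is bounded by `‖s‖ e^{-at}`, whose integral `‖s‖/a` is summable over `a = zₙ`,
so the integral against `φ` is `∑ log (1 + s/zₙ)`, whose exponential is the product `f s`. -/

noncomputable def logKernel (s : ℂ) (a t : ℝ) : ℂ :=
  (1 - Complex.exp (-s * t)) / t * (Real.exp (-a * t) : ℂ)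

lemma one_sub_cexp_neg_eq_integral (w : ℂ) :
    1 - Complex.exp (-w) = ∫ σ in (0:ℝ)..1, w * Complex.exp (-w * σ) := by
  rcases eq_or_ne w 0 with rfl | hw
  · simp
  rw [intervalIntegral.integral_const_mul, integral_exp_mul_complex (neg_ne_zero.mpr hw)]
  field_simp
  simp

lemma norm_one_sub_cexp_neg_le {w : ℂ} (hw : 0 ≤ w.re) : ‖1 - Complex.exp (-w)‖ ≤ ‖w‖ := by
  rw [one_sub_cexp_neg_eq_integral]
  refine (intervalIntegral.norm_integral_le_of_norm_le_const (C := ‖w‖) fun σ hσ => ?_).trans_eq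
    (by simp)
  rw [uIoc_of_le zero_le_one] at hσ
  rw [norm_mul, Complex.norm_exp]
  refine mul_le_of_le_one_right (norm_nonneg w) (Real.exp_le_one_iff.mpr ?_)
  simpa using mul_nonneg hw hσ.1.le

lemma integral_exp_neg_mul_Ioi_complex {c : ℂ} (hc : 0 < c.re) :
    ∫ t in Ioi (0 : ℝ), Complex.exp (-c * t) = c⁻¹ := by
  rw [integral_exp_mul_complex_Ioi (by simpa using hc)]
  simp

section
variable {s : ℂ} {a t : ℝ}

lemma norm_logKernel_le (hs : 0 ≤ s.re) (ht : 0 < t) :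
    ‖logKernel s a t‖ ≤ ‖s‖ * Real.exp (-a * t) := by
  have h := norm_one_sub_cexp_neg_le (w := s * t) (by simpa using mul_nonneg hs ht.le)
  rw [logKernel, norm_mul, norm_div, Complex.norm_real, Complex.norm_real,
    Real.norm_of_nonneg ht.le, Real.norm_of_nonneg (Real.exp_pos _).le, neg_mul]
  gcongr
  rw [div_le_iff₀ ht]
  simpa [norm_mul, Real.norm_of_nonneg ht.le] using h

lemma integrableOn_logKernel (hs : 0 ≤ s.re) (ha : 0 < a) :
    IntegrableOn (logKernel s a) (Ioi 0) := by
  refine Integrable.mono' ((exp_neg_integrableOn_Ioi 0 ha).const_mul ‖s‖) ?_ ?_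
  · refine ContinuousOn.aestronglyMeasurable ?_ measurableSet_Ioi
    refine ContinuousOn.mul ?_ (by fun_prop)
    exact ContinuousOn.div (by fun_prop) (by fun_prop) fun t ht => by exact_mod_cast (ne_of_gt ht)
  · filter_upwards [ae_restrict_mem measurableSet_Ioi] with t ht using norm_logKernel_le hs ht

lemma integral_norm_logKernel_le (hs : 0 ≤ s.re) (ha : 0 < a) :
    ∫ t in Ioi 0, ‖logKernel s a t‖ ≤ ‖s‖ / a := by
  calc ∫ t in Ioi 0, ‖logKernel s a t‖ ≤ ∫ t in Ioi 0, ‖s‖ * Real.exp (-a * t) :=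
        setIntegral_mono_on (integrableOn_logKernel hs ha).norm
          ((exp_neg_integrableOn_Ioi 0 ha).const_mul ‖s‖) measurableSet_Ioi
          fun t ht => norm_logKernel_le hs ht
    _ = ‖s‖ / a := by
        rw [integral_const_mul, integral_exp_mul_Ioi (neg_lt_zero.mpr ha)]
        field_simp
        simp

lemma logKernel_eq_integral (ht : 0 < t) :
    logKernel s a t = ∫ σ in Ioc (0 : ℝ) 1, s * Complex.exp (-(a + σ * s) * t) := by
  have ht0 : (t : ℂ) ≠ 0 := by exact_mod_cast ht.ne'
  rw [logKernel, neg_mul, one_sub_cexp_neg_eq_integral,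
    ← intervalIntegral.integral_of_le zero_le_one, ← intervalIntegral.integral_div,
    ← intervalIntegral.integral_mul_const]
  refine intervalIntegral.integral_congr fun σ _ => ?_
  simp only [Complex.ofReal_exp]
  field_simp
  rw [mul_assoc, ← Complex.exp_add]
  push_cast
  ring_nf

lemma re_ofReal_add_mul_pos (hs : 0 ≤ s.re) (ha : 0 < a) {σ : ℝ} (hσ : 0 ≤ σ) :
    0 < ((a : ℂ) + σ * s).re := by
  simpa using add_pos_of_pos_of_nonneg ha (mul_nonneg hσ hs)

lemma integrable_uncurry_mul_cexp_neg_mul (hs : 0 ≤ s.re) (ha : 0 < a) :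
    Integrable (Function.uncurry fun t σ : ℝ => s * Complex.exp (-(a + σ * s) * t))
      ((volume.restrict (Ioi 0)).prod (volume.restrict (Ioc 0 1))) := by
  refine Integrable.mono' (((exp_neg_integrableOn_Ioi 0 ha).const_mul ‖s‖).mul_prod
    (integrable_const (1 : ℝ))) (by fun_prop) ?_
  rw [Measure.prod_restrict]
  filter_upwards [ae_restrict_mem (measurableSet_Ioi.prod measurableSet_Ioc)] with p ⟨hp1, hp2⟩
  rw [Function.uncurry_apply_pair, norm_mul, Complex.norm_exp, mul_one]
  gcongr
  have : 0 ≤ p.2 * s.re * p.1 := mul_nonneg (mul_nonneg hp2.1.le hs) (le_of_lt hp1)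
  simp only [neg_mul, Complex.neg_re, Complex.mul_re, Complex.add_re, Complex.ofReal_re,
    Complex.ofReal_im, Complex.add_im, Complex.mul_im]
  nlinarith

lemma integral_div_add_mul_eq_log (hs : 0 ≤ s.re) (ha : 0 < a) :
    ∫ σ in (0 : ℝ)..1, s / (a + σ * s) = Complex.log (1 + s / a) := by
  have ha0 : (a : ℂ) ≠ 0 := by exact_mod_cast ha.ne'
  have hderiv : ∀ σ ∈ uIcc (0 : ℝ) 1,
      HasDerivAt (fun σ : ℝ => Complex.log (1 + σ * (s / a))) (s / (a + σ * s)) σ := by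
    intro σ hσ
    have hσ0 : 0 ≤ σ := by simpa using hσ.1
    have hslit : 1 + σ * (s / a) ∈ Complex.slitPlane := by
      refine Or.inl ?_
      have : 0 ≤ σ * (s.re / a) := mul_nonneg hσ0 (div_nonneg hs ha.le)
      simpa [Complex.div_ofReal_re] using! add_pos_of_pos_of_nonneg one_pos this
    have hlin : HasDerivAt (fun σ : ℝ => 1 + σ * (s / a)) (s / a) σ := by
      simpa using ((hasDerivAt_id (σ : ℂ)).mul_const (s / a)).const_add 1 |>.comp_ofReal
    convert hlin.clog_real hslit using 1
    field_simp
  rw [intervalIntegral.integral_eq_sub_of_hasDerivAt hderiv]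
  · simp
  · refine ContinuousOn.intervalIntegrable (continuousOn_const.div (by fun_prop) fun σ hσ => ?_)
    exact Complex.ne_zero_of_re_pos (re_ofReal_add_mul_pos hs ha (by simpa using hσ.1))

lemma integral_logKernel (hs : 0 ≤ s.re) (ha : 0 < a) :
    ∫ t in Ioi 0, logKernel s a t = Complex.log (1 + s / a) := by
  calc ∫ t in Ioi 0, logKernel s a t
      = ∫ t in Ioi (0 : ℝ), ∫ σ in Ioc (0 : ℝ) 1, s * Complex.exp (-(a + σ * s) * t) :=
        setIntegral_congr_fun measurableSet_Ioi fun t ht => logKernel_eq_integral ht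
    _ = ∫ σ in Ioc (0 : ℝ) 1, ∫ t in Ioi (0 : ℝ), s * Complex.exp (-(a + σ * s) * t) :=
        integral_integral_swap (integrable_uncurry_mul_cexp_neg_mul hs ha)
    _ = ∫ σ in Ioc (0 : ℝ) 1, s / (a + σ * s) := by
        refine setIntegral_congr_fun measurableSet_Ioc fun σ hσ => ?_
        rw [integral_const_mul,
          integral_exp_neg_mul_Ioi_complex (re_ofReal_add_mul_pos hs ha hσ.1.le), div_eq_mul_inv]
    _ = Complex.log (1 + s / a) := by
        rw [← intervalIntegral.integral_of_le zero_le_one, integral_div_add_mul_eq_log hs ha]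

end

/-- For `f(z) = ∏ (1 + z/zₙ)` with positive `zₙ`, `∑ 1/zₙ < ∞`,
`φ(t) = ∑ exp(-zₙ t)`, and any `z` with `Re z > 0`:
`f(z) = exp(∫_0^∞ ((1 - e^{-zt})/t) φ(t) dt)`. -/
theorem stmt_9 (z : ℕ → ℝ) (hz : ∀ n, 0 < z n)
    (hsum : Summable fun n => 1 / z n)
    (f : ℂ → ℂ) (hf : ∀ s : ℂ, f s = ∏' n, (1 + s / (z n : ℂ)))
    (s : ℂ) (hs : 0 < s.re) :
    f s = Complex.exp (∫ t in Ioi (0 : ℝ),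
      ((1 - Complex.exp (-s * (t : ℂ))) / (t : ℂ)) *
        ((∑' n, Real.exp (-(z n) * t) : ℝ) : ℂ)) := by
  have hne : ∀ n, 1 + s / (z n : ℂ) ≠ 0 := fun n => Complex.ne_zero_of_re_pos <| by
    simpa [Complex.div_ofReal_re] using! add_pos one_pos (div_pos hs (hz n))
  have hsum_log : Summable fun n => Complex.log (1 + s / (z n : ℂ)) := by
    refine Complex.summable_log_one_add_of_summable ?_
    simpa [div_eq_mul_one_div s] using (Complex.summable_ofReal.mpr hsum).mul_left s
  have hsum_norm : Summable fun n => ∫ t in Ioi 0, ‖logKernel s (z n) t‖ := by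
    refine Summable.of_nonneg_of_le (fun n => integral_nonneg fun _ => norm_nonneg _)
      (fun n => integral_norm_logKernel_le hs.le (hz n)) ?_
    simpa [div_eq_mul_one_div ‖s‖] using hsum.mul_left ‖s‖
  have hφ : (fun t : ℝ => (1 - Complex.exp (-s * t)) / t *
      ((∑' n, Real.exp (-(z n) * t) : ℝ) : ℂ)) = fun t => ∑' n, logKernel s (z n) t := by
    ext t
    simp only [logKernel, Complex.ofReal_tsum, tsum_mul_left]
  rw [hf, hφ, ← integral_tsum_of_summable_integral_norm
      (fun n => integrableOn_logKernel hs.le (hz n)) hsum_norm,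
    tsum_congr fun n => integral_logKernel hs.le (hz n), Complex.cexp_tsum_eq_tprod hne hsum_log]
end

section
/- Let (z_n)_{n≥1} be a sequence of positive real numbers with ∑_{n=1}^∞ 1/z_n < ∞, let f(x) = ∏_{n=1}^∞ (1 + x/z_n) for x > 0, and let β > 0. Then the function h(x) = f(x)^{-β} = exp(-β log f(x)) is completely monotonic on (0,∞): h is infinitely differentiable on (0,∞) and (-1)^n h^{(n)}(x) ≥ 0 for every x > 0 and every integer n ≥ 0. -/
open MeasureTheory Real Set
open Filter Topology


namespace Stmt12Aux

noncomputable def gg (z : ℕ → ℝ) (k : ℕ) (x : ℝ) : ℝ := ∑' n, ((x + z n)⁻¹) ^ (k + 1)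
noncomputable def SS (z : ℕ → ℝ) (x : ℝ) : ℝ := ∑' n, Real.log (1 + x / z n)
noncomputable def hh (z : ℕ → ℝ) (β x : ℝ) : ℝ := Real.exp (-β * SS z x)

section

variable {z : ℕ → ℝ} (hz : ∀ n, 0 < z n) (hsum : Summable fun n => 1 / z n)
include hz hsum

omit hz in
lemma summable_inv : Summable fun n => (z n)⁻¹ := by simpa [one_div] using hsum

lemma bound_ex : ∃ B : ℝ, 0 < B ∧ ∀ n, (z n)⁻¹ ≤ B := by
  have h0 : Tendsto (fun n => (z n)⁻¹) atTop (nhds 0) :=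
    (summable_inv hsum).tendsto_atTop_zero
  obtain ⟨B, hB⟩ := h0.bddAbove_range
  exact ⟨max B 1, by positivity, fun n => le_trans (hB ⟨n, rfl⟩) (le_max_left _ _)⟩

lemma term_le (k : ℕ) {B x : ℝ} (hB : 0 < B) (hBle : ∀ n, (z n)⁻¹ ≤ B) (hx : 0 < x) (n : ℕ) :
    ((x + z n)⁻¹) ^ (k + 1) ≤ B ^ k * (z n)⁻¹ := by
  have h0 := hz n
  have hzx : (0:ℝ) < x + z n := by linarith
  have h1 : (x + z n)⁻¹ ≤ (z n)⁻¹ := by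
    apply inv_anti₀ h0; linarith
  calc ((x + z n)⁻¹) ^ (k+1) ≤ ((z n)⁻¹) ^ (k+1) := by
        apply pow_le_pow_left₀ (by positivity) h1
    _ = ((z n)⁻¹) ^ k * (z n)⁻¹ := by ring
    _ ≤ B ^ k * (z n)⁻¹ := by
        apply mul_le_mul_of_nonneg_right _ (by positivity)
        exact pow_le_pow_left₀ (by positivity) (hBle n) k

lemma summable_pow (k : ℕ) {x : ℝ} (hx : 0 < x) :
    Summable fun n => ((x + z n)⁻¹) ^ (k + 1) := by
  obtain ⟨B, hB, hBle⟩ := bound_ex hz hsum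
  apply Summable.of_nonneg_of_le (fun n => by have := hz n; positivity)
    (term_le hz hsum k hB hBle hx) (((summable_inv hsum).mul_left (B ^ k)))

omit hsum in
lemma gg_nonneg (k : ℕ) {x : ℝ} (hx : 0 ≤ x) : 0 ≤ gg z k x := by
  apply tsum_nonneg; intro n; have := hz n; positivity

lemma hasDerivAt_gg (k : ℕ) {x : ℝ} (hx : 0 < x) :
    HasDerivAt (gg z k) (-((k:ℝ) + 1) * gg z (k + 1) x) x := by
  obtain ⟨B, hB, hBle⟩ := bound_ex hz hsum
  have key : HasDerivAt (fun y => ∑' n, ((y + z n)⁻¹) ^ (k + 1))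
      (∑' n, (-((k:ℝ)+1) * ((x + z n)⁻¹) ^ (k + 1 + 1))) x := by
    apply hasDerivAt_tsum_of_isPreconnected
      (u := fun n => ((k:ℝ)+1) * (B ^ (k+1) * (z n)⁻¹))
      (((summable_inv hsum).mul_left (B ^ (k+1))).mul_left ((k:ℝ)+1))
      isOpen_Ioi (isPreconnected_Ioi) (y₀ := (1:ℝ)) ?_ ?_ (by norm_num) ?_ hx
    · intro n y hy
      have hy' : (0:ℝ) < y := hy
      have hzy : (0:ℝ) < y + z n := by linarith [hz n]
      have h1 : HasDerivAt (fun w : ℝ => w + z n) 1 y := (hasDerivAt_id y).add_const _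
      have h2 := (h1.inv hzy.ne').pow (k+1)
      refine h2.congr_deriv (Eq.symm ?_)
      simp only [Nat.add_sub_cancel, Pi.inv_apply]
      push_cast
      rw [neg_div, div_eq_mul_inv, ← inv_pow, pow_add]
      ring
    · intro n y hy
      have hy' : (0:ℝ) < y := hy
      have hzy : (0:ℝ) < y + z n := by linarith [hz n]
      rw [Real.norm_eq_abs, abs_mul, abs_neg, abs_pow]
      rw [abs_of_pos (by positivity : (0:ℝ) < (k:ℝ)+1), abs_of_pos (by positivity)]
      exact mul_le_mul_of_nonneg_left (term_le hz hsum (k+1) hB hBle hy' n) (by positivity)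
    · exact summable_pow hz hsum k one_pos
  have : (∑' n, (-((k:ℝ)+1) * ((x + z n)⁻¹) ^ (k + 1 + 1))) = -((k:ℝ)+1) * gg z (k+1) x := by
    rw [tsum_mul_left]; rfl
  rw [this] at key
  exact key

lemma hasDerivAt_SS {x : ℝ} (hx : 0 < x) :
    HasDerivAt (SS z) (gg z 0 x) x := by
  obtain ⟨B, hB, hBle⟩ := bound_ex hz hsum
  have key : HasDerivAt (fun y => ∑' n, Real.log (1 + y / z n))
      (∑' n, ((x + z n)⁻¹) ^ (0 + 1)) x := by
    apply hasDerivAt_tsum_of_isPreconnected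
      (u := fun n => (z n)⁻¹) (summable_inv hsum)
      isOpen_Ioi (isPreconnected_Ioi) (y₀ := (1:ℝ)) ?_ ?_ (by norm_num) ?_ hx
    · intro n y hy
      have hy' : (0:ℝ) < y := hy
      have h0 := hz n
      have hzy : (0:ℝ) < 1 + y / z n := by positivity
      have h1 : HasDerivAt (fun w : ℝ => 1 + w / z n) (1 / z n) y := by
        simpa using ((hasDerivAt_id y).div_const (z n)).const_add 1
      have h2 := h1.log hzy.ne'
      refine h2.congr_deriv (Eq.symm ?_)
      rw [pow_one]
      field_simp
      ring
    · intro n y hy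
      have hy' : (0:ℝ) < y := hy
      have h0 := hz n
      have hzy : (0:ℝ) < y + z n := by linarith
      rw [Real.norm_eq_abs, abs_pow, abs_of_pos (by positivity)]
      rw [pow_one]
      apply inv_anti₀ h0; linarith
    · -- summability of log terms at 1
      apply Summable.of_nonneg_of_le (fun n => ?_) (fun n => ?_) (summable_inv hsum)
      · have h0 := hz n
        apply Real.log_nonneg; rw [le_add_iff_nonneg_right]; positivity
      · have h0 := hz n
        calc Real.log (1 + 1 / z n) ≤ 1 / z n := by
              apply Real.log_le_sub_one_of_pos (by positivity) |>.trans; ring_nf; rfl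
          _ = (z n)⁻¹ := one_div _
  exact key

end
end Stmt12Aux


namespace Stmt12Aux2

section
variable (c : ℕ → ℝ → ℝ) (h : ℝ → ℝ)

noncomputable def PP (l : List ℕ) (x : ℝ) : ℝ := (l.map (fun k => c k x)).prod
noncomputable def ev (l : List ℕ) (x : ℝ) : ℝ := h x * PP c l x

def DP : List ℕ → List (List ℕ)
  | [] => []
  | (k :: t) => ((k+1) :: t) :: (DP t).map (k :: ·)

def Dt (l : List ℕ) : List (List ℕ) := (0 :: l) :: DP l

noncomputable def EV (L : List (List ℕ)) (x : ℝ) : ℝ := (L.map (fun l => ev c h l x)).sum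

def LL : ℕ → List (List ℕ)
  | 0 => [[]]
  | (n+1) => (LL n).flatMap Dt

noncomputable def uu (n : ℕ) (x : ℝ) : ℝ := (-1:ℝ)^n * EV c h (LL n) x

variable {s : Set ℝ} (hs : IsOpen s)
variable (hc : ∀ k, ∀ x ∈ s, HasDerivAt (c k) (-(c (k+1) x)) x)
variable (hhd : ∀ x ∈ s, HasDerivAt h (-(c 0 x) * h x) x)
variable (hcpos : ∀ k, ∀ x ∈ s, 0 ≤ c k x) (hhpos : ∀ x ∈ s, 0 ≤ h x)

lemma sum_map_mul_left {α : Type*} (L : List α) (a : ℝ) (f : α → ℝ) :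
    (L.map (fun m => a * f m)).sum = a * (L.map f).sum := by
  induction L with
  | nil => simp
  | cons b t ih => simp [ih]; ring

include hc in
lemma hasDerivAt_PP (l : List ℕ) {x : ℝ} (hx : x ∈ s) :
    HasDerivAt (PP c l) (-(((DP l).map (fun m => PP c m x)).sum)) x := by
  induction l with
  | nil =>
    have h0 : HasDerivAt (PP c []) 0 x := hasDerivAt_const x (1:ℝ)
    simpa [DP] using h0
  | cons k t ih =>
    have h1 : HasDerivAt (fun y => c k y * PP c t y)
        ((-(c (k+1) x)) * PP c t x + c k x * (-(((DP t).map (fun m => PP c m x)).sum))) x :=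
      (hc k x hx).mul ih
    have h2 : ∀ y, PP c (k :: t) y = c k y * PP c t y := fun y => by simp [PP]
    have h3 : HasDerivAt (PP c (k :: t))
        ((-(c (k+1) x)) * PP c t x + c k x * (-(((DP t).map (fun m => PP c m x)).sum))) x := by
      simpa [funext h2] using h1
    convert h3 using 1
    simp only [DP, List.map_cons, List.sum_cons, List.map_map]
    have heq : ((DP t).map ((fun m => PP c m x) ∘ (k :: ·))).sum
        = ((DP t).map (fun m => c k x * PP c m x)).sum := by
      rfl
    rw [heq, sum_map_mul_left]
    simp only [PP, List.map_cons, List.prod_cons]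
    ring

include hc hhd in
lemma hasDerivAt_ev (l : List ℕ) {x : ℝ} (hx : x ∈ s) :
    HasDerivAt (ev c h l) (-(((Dt l).map (fun m => ev c h m x)).sum)) x := by
  have h1 := (hhd x hx).mul (hasDerivAt_PP c hc l hx)
  refine h1.congr_deriv (Eq.symm ?_)
  simp only [Dt, List.map_cons, List.sum_cons, ev]
  rw [sum_map_mul_left (DP l) (h x) (fun m => PP c m x)]
  simp only [PP, List.map_cons, List.prod_cons]
  ring

include hc hhd in
lemma hasDerivAt_EV (L : List (List ℕ)) {x : ℝ} (hx : x ∈ s) :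
    HasDerivAt (EV c h L) (-(EV c h (L.flatMap Dt) x)) x := by
  induction L with
  | nil =>
    have h0 : HasDerivAt (EV c h []) 0 x := hasDerivAt_const x (0:ℝ)
    simpa [EV] using h0
  | cons l t ih =>
    have h1 := (hasDerivAt_ev c h hc hhd l hx).add ih
    have h2 : ∀ y, EV c h (l :: t) y = ev c h l y + EV c h t y := fun y => by simp [EV]
    have h3 : EV c h ((l :: t).flatMap Dt) x = ((Dt l).map (fun m => ev c h m x)).sum + EV c h (t.flatMap Dt) x := by
      simp [EV, List.flatMap_cons]
    rw [funext h2]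
    rw [h3]
    refine h1.congr_deriv ?_
    ring

include hc hhd in
lemma hasDerivAt_uu (n : ℕ) {x : ℝ} (hx : x ∈ s) :
    HasDerivAt (uu c h n) (uu c h (n+1) x) x := by
  have h1 := (hasDerivAt_EV c h hc hhd (LL n) hx).const_mul ((-1:ℝ)^n)
  have h2 : ((-1:ℝ)^n) * (-(EV c h (LL (n+1)) x)) = uu c h (n+1) x := by
    simp only [uu, pow_succ]; ring
  rw [show (LL n).flatMap Dt = LL (n+1) from rfl] at h1
  rw [h2] at h1
  exact h1

include hcpos hhpos in
lemma EV_nonneg (L : List (List ℕ)) {x : ℝ} (hx : x ∈ s) : 0 ≤ EV c h L x := by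
  apply List.sum_nonneg
  intro a ha
  simp only [List.mem_map, EV] at ha
  obtain ⟨l, _, rfl⟩ := ha
  apply mul_nonneg (hhpos x hx)
  apply List.prod_nonneg
  intro b hb
  simp only [List.mem_map] at hb
  obtain ⟨k, _, rfl⟩ := hb
  exact hcpos k x hx

-- chain to iteratedDeriv
include hs in
lemma chain_iteratedDeriv {u : ℕ → ℝ → ℝ}
    (hu : ∀ m, ∀ x ∈ s, HasDerivAt (u m) (u (m+1) x) x) :
    ∀ m, ∀ x ∈ s, iteratedDeriv m (u 0) x = u m x := by
  intro m
  induction m with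
  | zero => intro x hx; simp
  | succ m ih =>
    intro x hx
    rw [iteratedDeriv_succ]
    have heq : iteratedDeriv m (u 0) =ᶠ[nhds x] u m := by
      filter_upwards [hs.mem_nhds hx] with y hy using ih y hy
    rw [heq.deriv_eq]
    exact (hu m x hx).deriv

end
end Stmt12Aux2


namespace Stmt12Aux3

variable {z : ℕ → ℝ} (hz : ∀ n, 0 < z n) (hsum : Summable fun n => 1 / z n) {β : ℝ}

noncomputable def Sc (z : ℕ → ℝ) (w : ℂ) : ℂ := ∑' n, Complex.log (1 + w / (z n : ℂ))
noncomputable def hcplx (z : ℕ → ℝ) (β : ℝ) (w : ℂ) : ℂ := Complex.exp (-(β:ℂ) * Sc z w)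

include hz hsum

omit hz hsum in
lemma re_pos_den (hz : ∀ n, 0 < z n) {y : ℂ} (hy : 0 ≤ y.re) (n : ℕ) :
    (0:ℝ) < (1 + y / (z n : ℂ)).re := by
  have h0 := hz n
  simp only [Complex.add_re, Complex.one_re, Complex.div_ofReal_re]
  have : 0 ≤ y.re / z n := by positivity
  linarith

lemma summable_clog_real {x : ℝ} (hx : 0 ≤ x) :
    Summable fun n => Complex.log (1 + (x:ℂ) / (z n : ℂ)) := by
  apply Summable.of_norm
  apply Summable.of_nonneg_of_le (fun n => norm_nonneg _) (fun n => ?_)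
    ((by simpa [one_div] using hsum : Summable fun n => (z n)⁻¹).mul_left x)
  have h0 := hz n
  have hcast : (1 : ℂ) + (x:ℂ) / (z n : ℂ) = ((1 + x / z n : ℝ) : ℂ) := by push_cast; ring
  rw [hcast, ← Complex.ofReal_log (by positivity), Complex.norm_real, Real.norm_eq_abs,
    abs_of_nonneg (Real.log_nonneg (by rw [le_add_iff_nonneg_right]; positivity))]
  calc Real.log (1 + x / z n) ≤ (1 + x / z n) - 1 :=
        Real.log_le_sub_one_of_pos (by positivity)
    _ = x * (z n)⁻¹ := by ring

lemma hasDerivAt_Sc {w : ℂ} (hw : 0 < w.re) :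
    HasDerivAt (Sc z) (∑' n, ((1 / (z n : ℂ)) / (1 + w / (z n : ℂ)))) w := by
  have hU : IsOpen {w : ℂ | 0 < w.re} := isOpen_lt continuous_const Complex.continuous_re
  have hconv : Convex ℝ {w : ℂ | 0 < w.re} := convex_halfSpace_re_gt 0
  apply hasDerivAt_tsum_of_isPreconnected
    (u := fun n => (z n)⁻¹) (by simpa [one_div] using hsum)
    hU hconv.isPreconnected (y₀ := (1:ℂ)) ?_ ?_ (by simp) ?_ hw
  · intro n y hy
    have h0 := hz n
    have hre := re_pos_den hz (le_of_lt hy) n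
    have h1 : HasDerivAt (fun w : ℂ => 1 + w / (z n : ℂ)) (1 / (z n : ℂ)) y := by
      simpa using ((hasDerivAt_id y).div_const ((z n : ℂ))).const_add 1
    exact h1.clog (Complex.mem_slitPlane_iff.2 (Or.inl hre))
  · intro n y hy
    have h0 := hz n
    have hy' : (0:ℝ) < y.re := hy
    have hden : (1:ℝ) ≤ ‖1 + y / (z n : ℂ)‖ := by
      refine le_trans ?_ (Complex.re_le_norm _)
      simp only [Complex.add_re, Complex.one_re, Complex.div_ofReal_re]
      have : 0 ≤ y.re / z n := by positivity
      linarith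
    rw [norm_div]
    have habs1 : ‖1 / (z n : ℂ)‖ = (z n)⁻¹ := by
      rw [one_div, norm_inv, Complex.norm_real, Real.norm_eq_abs, abs_of_pos h0]
    rw [habs1]
    rw [div_le_iff₀ (by linarith)]
    calc (z n)⁻¹ = (z n)⁻¹ * 1 := by ring
      _ ≤ (z n)⁻¹ * ‖1 + y / (z n : ℂ)‖ := by
          apply mul_le_mul_of_nonneg_left hden (by positivity)
  · exact by simpa [one_div] using summable_clog_real hz hsum (zero_le_one (α := ℝ))

lemma differentiableOn_hcplx :
    DifferentiableOn ℂ (hcplx z β) {w : ℂ | 0 < w.re} := by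
  intro w hw
  apply DifferentiableAt.differentiableWithinAt
  have h1 : DifferentiableAt ℂ (Sc z) w := (hasDerivAt_Sc hz hsum hw).differentiableAt
  exact ((h1.const_mul (-(β:ℂ)))).cexp

lemma analyticOnNhd_hre :
    AnalyticOnNhd ℝ (fun x : ℝ => (hcplx z β ((x:ℝ) : ℂ)).re) (Ioi (0:ℝ)) := by
  have hU : IsOpen {w : ℂ | 0 < w.re} := isOpen_lt continuous_const Complex.continuous_re
  have h1 : AnalyticOnNhd ℂ (hcplx z β) {w : ℂ | 0 < w.re} :=
    (differentiableOn_hcplx hz hsum).analyticOnNhd hU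
  have h2 : AnalyticOnNhd ℝ (hcplx z β) {w : ℂ | 0 < w.re} := h1.restrictScalars
  have h3 : AnalyticOnNhd ℝ (fun x : ℝ => ((x:ℝ) : ℂ)) (Ioi (0:ℝ)) :=
    fun x _ => Complex.ofRealCLM.analyticAt x
  have h4 : AnalyticOnNhd ℝ (fun x : ℝ => hcplx z β ((x:ℝ):ℂ)) (Ioi (0:ℝ)) := by
    apply h2.comp h3
    intro x hx
    simpa using (hx : (0:ℝ) < x)
  exact fun x hx => (Complex.reCLM.analyticAt _).comp (h4 x hx)

end Stmt12Aux3

-- extra glue lemmas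
namespace Stmt12Glue
open Stmt12Aux Stmt12Aux2 Stmt12Aux3

variable {z : ℕ → ℝ} (hz : ∀ n, 0 < z n) (hsum : Summable fun n => 1 / z n) {β : ℝ}

include hz hsum in
lemma summable_log {x : ℝ} (hx : 0 ≤ x) :
    Summable fun n => Real.log (1 + x / z n) := by
  apply Summable.of_nonneg_of_le (fun n => ?_) (fun n => ?_)
    ((by simpa [one_div] using hsum : Summable fun n => (z n)⁻¹).mul_left x)
  · have h0 := hz n
    apply Real.log_nonneg; rw [le_add_iff_nonneg_right]; positivity
  · have h0 := hz n
    calc Real.log (1 + x / z n) ≤ (1 + x / z n) - 1 :=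
          Real.log_le_sub_one_of_pos (by positivity)
      _ = x * (z n)⁻¹ := by ring

include hz hsum in
lemma tprod_eq_exp {x : ℝ} (hx : 0 < x) :
    (∏' n, (1 + x / z n)) = Real.exp (SS z x) := by
  have hs := (summable_log hz hsum hx.le).hasSum
  have hp := hs.rexp
  have heq : (rexp ∘ fun n => Real.log (1 + x / z n)) = fun n => 1 + x / z n := by
    funext n
    have h0 := hz n
    exact Real.exp_log (by positivity)
  rw [heq] at hp
  exact hp.tprod_eq

include hz hsum in
lemma hcplx_real {x : ℝ} (hx : 0 < x) :
    (hcplx z β ((x:ℝ):ℂ)).re = hh z β x := by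
  have hSc : Sc z ((x:ℝ):ℂ) = ((SS z x : ℝ) : ℂ) := by
    rw [SS, Complex.ofReal_tsum, Sc]
    apply tsum_congr
    intro n
    have h0 := hz n
    have hcast : (1 : ℂ) + (x:ℂ) / (z n : ℂ) = ((1 + x / z n : ℝ) : ℂ) := by push_cast; ring
    rw [hcast, ← Complex.ofReal_log (by positivity)]
  rw [hcplx, hSc, hh]
  have : (-(β:ℂ) * ((SS z x : ℝ):ℂ)) = ((-β * SS z x : ℝ) : ℂ) := by push_cast; ring
  rw [this, ← Complex.ofReal_exp, Complex.ofReal_re]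

end Stmt12Glue

open Stmt12Aux Stmt12Aux2 Stmt12Aux3 Stmt12Glue in
/-- For `f(x) = ∏ (1 + x/zₙ)` on `(0,∞)` with positive `zₙ`, `∑ 1/zₙ < ∞`, and
`β > 0`, the function `h(x) = f(x)^(-β)` is completely monotonic on `(0,∞)`:
`h` is `C^∞` on `(0,∞)` and `(-1)^n h^{(n)}(x) ≥ 0` for all `x > 0`, `n ≥ 0`. -/
theorem stmt_12 (z : ℕ → ℝ) (hz : ∀ n, 0 < z n)
    (hsum : Summable fun n => 1 / z n)
    (f : ℝ → ℝ) (hf : ∀ x : ℝ, 0 < x → f x = ∏' n, (1 + x / z n))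
    (β : ℝ) (hβ : 0 < β) :
    ContDiffOn ℝ (⊤ : ℕ∞) (fun x => f x ^ (-β)) (Ioi 0) ∧
    ∀ (n : ℕ) (x : ℝ), 0 < x →
      0 ≤ (-1) ^ n * iteratedDeriv n (fun x => f x ^ (-β)) x := by
  -- the target function agrees with hh z β on Ioi 0
  have hFeq : EqOn (fun x => f x ^ (-β)) (hh z β) (Ioi 0) := by
    intro x hx
    have hx' : (0:ℝ) < x := hx
    have hfx : f x = Real.exp (SS z x) := by
      rw [hf x hx', tprod_eq_exp hz hsum hx']
    simp only
    rw [hfx, hh, ← Real.exp_log (Real.exp_pos (SS z x)), Real.exp_log (Real.exp_pos _),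
      Real.rpow_def_of_pos (Real.exp_pos _), Real.log_exp]
    ring_nf
  constructor
  · -- analyticity part
    have hA : AnalyticOnNhd ℝ (fun x : ℝ => (hcplx z β ((x:ℝ) : ℂ)).re) (Ioi (0:ℝ)) :=
      analyticOnNhd_hre hz hsum
    have hC : ContDiffOn ℝ (⊤ : ℕ∞) (fun x : ℝ => (hcplx z β ((x:ℝ) : ℂ)).re) (Ioi (0:ℝ)) :=
      hA.contDiffOn (uniqueDiffOn_Ioi 0)
    apply hC.congr
    intro x hx
    exact (hFeq hx).trans (hcplx_real hz hsum (show (0:ℝ) < x from hx)).symm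
  · -- complete monotonicity part
    set c : ℕ → ℝ → ℝ := fun k x => β * (k.factorial : ℝ) * gg z k x with hc_def
    have hc : ∀ k, ∀ x ∈ Ioi (0:ℝ), HasDerivAt (c k) (-(c (k+1) x)) x := by
      intro k x hx
      have h1 := (hasDerivAt_gg hz hsum k (show (0:ℝ) < x from hx)).const_mul (β * (k.factorial : ℝ))
      refine h1.congr_deriv (Eq.symm ?_)
      simp only [hc_def, Nat.factorial_succ]
      push_cast
      ring
    have hhd : ∀ x ∈ Ioi (0:ℝ), HasDerivAt (hh z β) (-(c 0 x) * hh z β x) x := by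
      intro x hx
      have h1 := ((hasDerivAt_SS hz hsum (show (0:ℝ) < x from hx)).const_mul (-β)).exp
      refine h1.congr_deriv (Eq.symm ?_)
      simp only [hc_def, Nat.factorial_zero, Nat.cast_one, hh]
      ring
    have hcpos : ∀ k, ∀ x ∈ Ioi (0:ℝ), 0 ≤ c k x := by
      intro k x hx
      have := gg_nonneg hz (z := z) k (le_of_lt (show (0:ℝ) < x from hx))
      positivity
    have hhpos : ∀ x ∈ Ioi (0:ℝ), 0 ≤ hh z β x := fun x _ => (Real.exp_pos _).le
    have hchain : ∀ m, ∀ x ∈ Ioi (0:ℝ), HasDerivAt (uu c (hh z β) m) (uu c (hh z β) (m+1) x) x :=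
      fun m x hx => hasDerivAt_uu c (hh z β) hc hhd m hx
    have hu0 : uu c (hh z β) 0 = hh z β := by
      funext x
      simp [uu, EV, LL, ev, PP]
    have hiter : ∀ m, ∀ x ∈ Ioi (0:ℝ), iteratedDeriv m (uu c (hh z β) 0) x = uu c (hh z β) m x :=
      chain_iteratedDeriv isOpen_Ioi hchain
    intro n x hx
    have hx' : x ∈ Ioi (0:ℝ) := hx
    have h1 : iteratedDeriv n (fun x => f x ^ (-β)) x = uu c (hh z β) n x := by
      rw [hFeq.iteratedDeriv_of_isOpen isOpen_Ioi n hx']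
      conv_lhs => rw [← hu0]
      exact hiter n x hx'
    rw [h1, uu, ← mul_assoc, ← mul_pow]
    norm_num
    exact EV_nonneg c (hh z β) hcpos hhpos (LL n) hx'
end

section
/- Let (z_n)_{n≥1} be a sequence of positive real numbers with ∑_{n=1}^∞ 1/z_n < ∞, let f : ℂ → ℂ be the entire function f(z) = ∏_{n=1}^∞ (1 + z/z_n), and let g = f'/f be the logarithmic derivative of f, which is analytic on the half-plane Re z > 0. Then for every integer n ≥ 0 and every complex z = x + i y with x > 0, |g^{(n)}(z)| ≤ (-1)^n g^{(n)}(x), where g^{(n)} denotes the n-th complex derivative of g. -/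
/-!
On `Re s > 0` the logarithmic derivative of the locally uniformly convergent product is the
series `g s = ∑ 1 / (s + zₙ)`, which may be differentiated termwise:
`g⁽ᵏ⁾ s = (-1)ᵏ k! ∑ (s + zₙ)^-(k+1)`. Since `‖s + zₙ‖ ≥ Re s + zₙ`, the triangle inequality
bounds `‖g⁽ᵏ⁾ s‖` by `k! ∑ (Re s + zₙ)^-(k+1) = (-1)ᵏ g⁽ᵏ⁾ (Re s)`.
-/

open Complex Filter Topology
open scoped Nat

theorem hasDerivAt_inv_add_pow {𝕜 : Type*} [NontriviallyNormedField 𝕜] {a s : 𝕜}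
    (h : s + a ≠ 0) (k : ℕ) :
    HasDerivAt (fun w => (w + a)⁻¹ ^ (k + 1)) (-(k + 1) * (s + a)⁻¹ ^ (k + 2)) s := by
  refine ((((hasDerivAt_id s).add_const a).inv h).fun_pow (k + 1)).congr_deriv ?_
  simp only [Pi.inv_apply, id, Nat.add_sub_cancel, div_eq_mul_inv, ← inv_pow]
  push_cast
  ring

theorem logDeriv_one_add_div {𝕜 : Type*} [NontriviallyNormedField 𝕜] {a : 𝕜} (ha : a ≠ 0)
    (s : 𝕜) : logDeriv (fun w => 1 + w / a) s = (s + a)⁻¹ := by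
  rw [logDeriv_apply, deriv_const_add, deriv_div_const, deriv_id'', one_add_div ha, add_comm a,
    div_div_div_cancel_right₀ ha, one_div]

theorem add_ofReal_ne_zero {s : ℂ} {a : ℝ} (hs : 0 ≤ s.re) (ha : 0 < a) : s + a ≠ 0 :=
  fun h => (add_pos_of_nonneg_of_pos hs ha).ne' (by simpa using congrArg re h)

theorem norm_inv_add_ofReal_pow_le {s : ℂ} {a : ℝ} (hs : 0 ≤ s.re) (ha : 0 < a) (m : ℕ) :
    ‖(s + a)⁻¹ ^ m‖ ≤ (s.re + a)⁻¹ ^ m := by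
  rw [norm_pow, norm_inv]
  gcongr
  simpa using re_le_norm (s + a)

theorem inv_add_pow_succ_le {ε x a : ℝ} (hε : 0 < ε) (hx : ε ≤ x) (ha : 0 < a) (k : ℕ) :
    (x + a)⁻¹ ^ (k + 1) ≤ ε⁻¹ ^ k * a⁻¹ := by
  rw [pow_succ]
  have hxa : 0 < x + a := by linarith
  gcongr <;> linarith

theorem norm_inv_add_ofReal_pow_succ_le {s : ℂ} {ε a : ℝ} (hε : 0 < ε) (hs : ε ≤ s.re)
    (ha : 0 < a) (k : ℕ) : ‖(s + a)⁻¹ ^ (k + 1)‖ ≤ ε⁻¹ ^ k * a⁻¹ :=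
  (norm_inv_add_ofReal_pow_le (hε.le.trans hs) ha _).trans (inv_add_pow_succ_le hε hs ha k)

section

variable {ι : Type*} {z : ι → ℝ}

theorem summable_inv_add_pow (hz : ∀ n, 0 < z n) (hsum : Summable fun n => (z n)⁻¹)
    {x : ℝ} (hx : 0 < x) (k : ℕ) : Summable fun n => (x + z n)⁻¹ ^ (k + 1) :=
  .of_nonneg_of_le (fun n => by have := hz n; positivity)
    (fun n => inv_add_pow_succ_le hx le_rfl (hz n) k) (hsum.mul_left _)

theorem summable_norm_inv_add_ofReal_pow (hz : ∀ n, 0 < z n) (hsum : Summable fun n => (z n)⁻¹)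
    {s : ℂ} (hs : 0 < s.re) (k : ℕ) : Summable fun n => ‖(s + z n)⁻¹ ^ (k + 1)‖ :=
  .of_nonneg_of_le (fun _ => norm_nonneg _)
    (fun n => norm_inv_add_ofReal_pow_le hs.le (hz n) _) (summable_inv_add_pow hz hsum hs k)

theorem norm_tsum_inv_add_ofReal_pow_le (hz : ∀ n, 0 < z n) (hsum : Summable fun n => (z n)⁻¹)
    {s : ℂ} (hs : 0 < s.re) (k : ℕ) :
    ‖∑' n, (s + z n)⁻¹ ^ (k + 1)‖ ≤ ∑' n, (s.re + z n)⁻¹ ^ (k + 1) :=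
  (norm_tsum_le_tsum_norm (summable_norm_inv_add_ofReal_pow hz hsum hs k)).trans <|
    (summable_norm_inv_add_ofReal_pow hz hsum hs k).tsum_le_tsum
      (fun n => norm_inv_add_ofReal_pow_le hs.le (hz n) _) (summable_inv_add_pow hz hsum hs k)

theorem hasDerivAt_tsum_inv_add_ofReal_pow (hz : ∀ n, 0 < z n)
    (hsum : Summable fun n => (z n)⁻¹) {s : ℂ} (hs : 0 < s.re) (k : ℕ) :
    HasDerivAt (fun w : ℂ => ∑' n, (w + z n)⁻¹ ^ (k + 1))
      (-(k + 1 : ℂ) * ∑' n, (s + z n)⁻¹ ^ (k + 2)) s := by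
  set ε := s.re / 2
  have hε : 0 < ε := by positivity
  have hsε : s ∈ {w : ℂ | ε < w.re} := by simp only [Set.mem_ofPred_eq, ε]; linarith
  rw [← tsum_mul_left]
  refine hasDerivAt_tsum_of_isPreconnected (u := fun n => (k + 1) * (ε⁻¹ ^ (k + 1) * (z n)⁻¹))
    ((hsum.mul_left _).mul_left _) (isOpen_lt continuous_const continuous_re)
    (convex_halfSpace_re_gt ε).isPreconnected
    (fun n w hw => hasDerivAt_inv_add_pow (add_ofReal_ne_zero (hε.trans hw).le (hz n)) k) ?_ hsε
    (summable_norm_inv_add_ofReal_pow hz hsum hs k).of_norm hsε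
  intro n w hw
  rw [norm_mul, norm_neg,
    show ‖(k + 1 : ℂ)‖ = k + 1 by exact_mod_cast Complex.norm_natCast (k + 1)]
  gcongr
  exact norm_inv_add_ofReal_pow_succ_le hε (le_of_lt hw) (hz n) (k + 1)

theorem iteratedDeriv_tsum_inv_add_ofReal (hz : ∀ n, 0 < z n) (hsum : Summable fun n => (z n)⁻¹)
    (k : ℕ) {s : ℂ} (hs : 0 < s.re) :
    iteratedDeriv k (fun w : ℂ => ∑' n, (w + z n)⁻¹) s
      = (-1) ^ k * k ! * ∑' n, (s + z n)⁻¹ ^ (k + 1) := by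
  induction k generalizing s with
  | zero => simp
  | succ k ih =>
    have hev : iteratedDeriv k (fun w : ℂ => ∑' n, (w + z n)⁻¹)
        =ᶠ[𝓝 s] fun w => (-1) ^ k * k ! * ∑' n, (w + z n)⁻¹ ^ (k + 1) :=
      eventually_of_mem ((isOpen_lt continuous_const continuous_re).mem_nhds hs) fun w hw => ih hw
    rw [iteratedDeriv_succ, hev.deriv_eq,
      ((hasDerivAt_tsum_inv_add_ofReal_pow hz hsum hs k).const_mul _).deriv, Nat.factorial_succ]
    push_cast
    ring

theorem logDeriv_tprod_one_add_div_ofReal (hz : ∀ n, 0 < z n) (hsum : Summable fun n => (z n)⁻¹)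
    {s : ℂ} (hs : 0 < s.re) :
    logDeriv (fun w : ℂ => ∏' n, (1 + w / z n)) s = ∑' n, (s + z n)⁻¹ := by
  have hz' n : (z n : ℂ) ≠ 0 := ofReal_ne_zero.mpr (hz n).ne'
  have hnorm_div (w : ℂ) n : ‖w / z n‖ = ‖w‖ * (z n)⁻¹ := by
    rw [norm_div, norm_real, Real.norm_of_nonneg (hz n).le, div_eq_mul_inv]
  have hfactor n : 1 + s / z n ≠ 0 := by
    rw [one_add_div (hz' n), add_comm]
    exact div_ne_zero (add_ofReal_ne_zero hs.le (hz n)) (hz' n)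
  have hlogDeriv n : logDeriv (fun w : ℂ => 1 + w / z n) s = (s + z n)⁻¹ :=
    logDeriv_one_add_div (hz' n) s
  rw [logDeriv_tprod_eq_tsum Metric.isOpen_ball (mem_ball_zero_iff.mpr (lt_add_one ‖s‖))
    hfactor (fun n => by fun_prop) ?_ ?_ ?_]
  · simp only [hlogDeriv]
  · simpa only [hlogDeriv, zero_add, pow_one] using
      (summable_norm_inv_add_ofReal_pow hz hsum hs 0).of_norm
  · refine (hsum.mul_left (‖s‖ + 1)).multipliableLocallyUniformlyOn_one_add Metric.isOpen_ball
      (.of_forall fun n w hw => ?_) (fun n => by fun_prop)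
    rw [hnorm_div]
    have hzn := hz n
    gcongr
    exact (mem_ball_zero_iff.mp hw).le
  · refine tprod_one_add_ne_zero_of_summable hfactor ?_
    simpa only [hnorm_div] using hsum.mul_left ‖s‖

theorem iteratedDeriv_logDeriv_tprod_one_add_div_ofReal (hz : ∀ n, 0 < z n)
    (hsum : Summable fun n => (z n)⁻¹) (k : ℕ) {s : ℂ} (hs : 0 < s.re) :
    iteratedDeriv k (logDeriv fun w : ℂ => ∏' n, (1 + w / z n)) s
      = (-1) ^ k * k ! * ∑' n, (s + z n)⁻¹ ^ (k + 1) := by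
  have hev : (logDeriv fun w : ℂ => ∏' n, (1 + w / z n)) =ᶠ[𝓝 s] fun w => ∑' n, (w + z n)⁻¹ :=
    eventually_of_mem ((isOpen_lt continuous_const continuous_re).mem_nhds hs)
      fun w hw => logDeriv_tprod_one_add_div_ofReal hz hsum hw
  rw [hev.iteratedDeriv_eq, iteratedDeriv_tsum_inv_add_ofReal hz hsum k hs]

end

/-- For `f(z) = ∏ (1 + z/zₙ)` with positive `zₙ`, `∑ 1/zₙ < ∞`, and `g = f'/f`
(analytic on `Re z > 0`), for every `n ≥ 0` and every `z = x + iy` with `x > 0`: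
`|g^{(n)}(z)| ≤ (-1)^n g^{(n)}(x)`. -/
theorem stmt_13 (z : ℕ → ℝ) (hz : ∀ n, 0 < z n)
    (hsum : Summable fun n => 1 / z n)
    (f : ℂ → ℂ) (hf : ∀ s : ℂ, f s = ∏' n, (1 + s / (z n : ℂ)))
    (n : ℕ) (s : ℂ) (hs : 0 < s.re) :
    ‖iteratedDeriv n (fun w => deriv f w / f w) s‖
      ≤ ((-1) ^ n * iteratedDeriv n (fun w => deriv f w / f w) ((s.re : ℝ) : ℂ)).re := by
  obtain rfl : f = fun w => ∏' n, (1 + w / (z n : ℂ)) := funext hf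
  have hsum' : Summable fun n => (z n)⁻¹ := by simpa only [one_div] using hsum
  change ‖iteratedDeriv n (logDeriv _) s‖
    ≤ ((-1 : ℂ) ^ n * iteratedDeriv n (logDeriv _) (s.re : ℂ)).re
  rw [iteratedDeriv_logDeriv_tprod_one_add_div_ofReal hz hsum' n hs,
    iteratedDeriv_logDeriv_tprod_one_add_div_ofReal hz hsum' n (by simpa using hs)]
  have hreal : ∑' m, ((s.re : ℂ) + z m)⁻¹ ^ (n + 1)
      = ((∑' m, (s.re + z m)⁻¹ ^ (n + 1) : ℝ) : ℂ) := by
    push_cast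
    rfl
  calc ‖(-1) ^ n * n ! * ∑' m, (s + z m)⁻¹ ^ (n + 1)‖
      = n ! * ‖∑' m, (s + z m)⁻¹ ^ (n + 1)‖ := by simp
    _ ≤ n ! * ∑' m, (s.re + z m)⁻¹ ^ (n + 1) := by
      gcongr
      exact norm_tsum_inv_add_ofReal_pow_le hz hsum' hs n
    _ = ((-1) ^ n * ((-1) ^ n * n ! * ∑' m, ((s.re : ℂ) + z m)⁻¹ ^ (n + 1))).re := by
      rw [hreal, ← mul_assoc, ← mul_assoc, ← mul_pow]
      norm_num
end
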